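/- Let C = P;S be a sorting network on n channels of depth d, and let Q be a comparator network on n channels such that P and Q have the same depth and outputs(Q) ⊆ π(outputs(P)) for some permutation π of {1,…,n}. Then there exists a comparator network S' with the same depth as S such that Q;S' is a sorting network on n channels of depth d. -/

import Mathlib

namespace SN

open scoped Classical

/-- A comparator on `n` channels: a pair of channels. -/
abbrev Comp (n : ℕ) := Fin n × Fin n

/-- A layer is a finite set of comparators. -/
abbrev Layer (n : ℕ) := Finset (Comp n)

/-- A comparator network is a sequence (list) of layers; its depth is the length. -/
abbrev Net (n : ℕ) := List (Layer n)

/-- Each channel is used by at most one comparator of the layer. -/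
def NoOverlap {n : ℕ} (L : Layer n) : Prop :=
  ∀ c ∈ L, ∀ c' ∈ L, c ≠ c' →
    c.1 ≠ c'.1 ∧ c.1 ≠ c'.2 ∧ c.2 ≠ c'.1 ∧ c.2 ≠ c'.2

/-- A (standard) layer: comparators `(i,j)` with `i < j`, channels pairwise disjoint. -/
def IsLayer {n : ℕ} (L : Layer n) : Prop :=
  (∀ c ∈ L, c.1 < c.2) ∧ NoOverlap L

/-- A generalized layer: comparators `(i,j)` with `i ≠ j` allowed in any order. -/
def IsGenLayer {n : ℕ} (L : Layer n) : Prop :=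
  (∀ c ∈ L, c.1 ≠ c.2) ∧ NoOverlap L

def IsNet {n : ℕ} (C : Net n) : Prop := ∀ L ∈ C, IsLayer L

def IsGenNet {n : ℕ} (C : Net n) : Prop := ∀ L ∈ C, IsGenLayer L

/-- Apply one layer to a Boolean vector: a comparator `(i,j)` puts the min
(`&&`) on channel `i` and the max (`||`) on channel `j`. -/
noncomputable def applyLayer {n : ℕ} (L : Layer n) (x : Fin n → Bool) : Fin n → Bool :=
  fun k =>
    if h1 : ∃ c ∈ L, c.1 = k then x h1.choose.1 && x h1.choose.2
    else if h2 : ∃ c ∈ L, c.2 = k then x h2.choose.1 || x h2.choose.2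
    else x k

/-- Run a comparator network on a Boolean input (layers applied in sequence). -/
noncomputable def run {n : ℕ} (C : Net n) (x : Fin n → Bool) : Fin n → Bool :=
  C.foldl (fun y L => applyLayer L y) x

/-- Ascendingly sorted Boolean vector. -/
def BSorted {n : ℕ} (x : Fin n → Bool) : Prop :=
  ∀ i j : Fin n, i ≤ j → x i ≤ x j

/-- A sorting network: a comparator network sorting every Boolean input. -/
def IsSortingNet {n : ℕ} (C : Net n) : Prop :=
  IsNet C ∧ ∀ x : Fin n → Bool, BSorted (run C x)

/-- The set of outputs of a network on all Boolean inputs. -/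
def outputs {n : ℕ} (C : Net n) : Set (Fin n → Bool) := Set.range (run C)

/-- Apply one layer to a vector of naturals. -/
noncomputable def applyLayerN {n : ℕ} (L : Layer n) (x : Fin n → ℕ) : Fin n → ℕ :=
  fun k =>
    if h1 : ∃ c ∈ L, c.1 = k then min (x h1.choose.1) (x h1.choose.2)
    else if h2 : ∃ c ∈ L, c.2 = k then max (x h2.choose.1) (x h2.choose.2)
    else x k

noncomputable def runN {n : ℕ} (C : Net n) (x : Fin n → ℕ) : Fin n → ℕ :=
  C.foldl (fun y L => applyLayerN L y) x

def NSorted {n : ℕ} (x : Fin n → ℕ) : Prop :=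
  ∀ i j : Fin n, i ≤ j → x i ≤ x j

/-- Permute the coordinates of a Boolean vector by `π` (channel `k`'s value
moves to channel `π k`). -/
def permVec {n : ℕ} (π : Equiv.Perm (Fin n)) (x : Fin n → Bool) : Fin n → Bool :=
  fun i => x (π.symm i)

/-- The image of a set of Boolean vectors under coordinate permutation by `π`. -/
def permSet {n : ℕ} (π : Equiv.Perm (Fin n)) (X : Set (Fin n → Bool)) :
    Set (Fin n → Bool) :=
  permVec π '' X

/-- The image `π(L)` of a layer under a permutation of channels. -/
def permLayer {n : ℕ} (π : Equiv.Perm (Fin n)) (L : Layer n) : Layer n :=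
  L.image fun c => (π c.1, π c.2)

/-- Channel `i` is used by some comparator of the layer `L`. -/
def usedIn {n : ℕ} (L : Layer n) (i : Fin n) : Prop := ∃ c ∈ L, c.1 = i ∨ c.2 = i

/-- Channels `i` and `j` are joined by a comparator of `L`. -/
def Joined {n : ℕ} (L : Layer n) (i j : Fin n) : Prop := (i, j) ∈ L ∨ (j, i) ∈ L

/-- `i` is the smaller channel of some comparator of `L` (a min-channel). -/
def MinChan {n : ℕ} (L : Layer n) (i : Fin n) : Prop := ∃ c ∈ L, c.1 = i

/-- `i` is the larger channel of some comparator of `L` (a max-channel). -/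
def MaxChan {n : ℕ} (L : Layer n) (i : Fin n) : Prop := ∃ c ∈ L, c.2 = i

/-- A two-layer network `[L1, L2]` is redundant if some comparator can be removed
so that the outputs of the result are a permutation of the original outputs. -/
def Redundant {n : ℕ} (L1 L2 : Layer n) : Prop :=
  ∃ π : Equiv.Perm (Fin n),
    (∃ c ∈ L1, outputs [L1.erase c, L2] = permSet π (outputs [L1, L2])) ∨
    (∃ c ∈ L2, outputs [L1, L2.erase c] = permSet π (outputs [L1, L2]))

/-- A two-layer network `[L1, L2]` is saturated if it is non-redundant and no
comparator on two channels unused in the second layer can be added to the second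
layer so as to make the output set a proper subset of a permutation of the
original output set. -/
def Saturated {n : ℕ} (L1 L2 : Layer n) : Prop :=
  ¬ Redundant L1 L2 ∧
  ¬ ∃ (c : Comp n) (π : Equiv.Perm (Fin n)),
      c.1 < c.2 ∧ ¬ usedIn L2 c.1 ∧ ¬ usedIn L2 c.2 ∧
      outputs [L1, insert c L2] ⊂ permSet π (outputs [L1, L2])

/-- Vertices of the graph representation of `C`: the comparators of `C`,
tagged with the index of the layer containing them. -/
def Vertex {n : ℕ} (C : Net n) := {p : ℕ × Comp n // p.2 ∈ C.getD p.1 ∅}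

/-- The channel carrying the min output (`b = false`, label 1) or max output
(`b = true`, label 2) of a comparator. -/
def outChan {n : ℕ} (c : Comp n) (b : Bool) : Fin n := if b then c.2 else c.1

/-- An edge with label `b` (1 for min, 2 for max) from comparator `u` to
comparator `v`: the corresponding output of `u` is an input of `v`, i.e. `v`
is the next comparator on that channel. -/
def Edge {n : ℕ} (C : Net n) (b : Bool) (u v : ℕ × Comp n) : Prop :=
  u.1 < v.1 ∧ (outChan u.2 b = v.2.1 ∨ outChan u.2 b = v.2.2) ∧
  ∀ m, u.1 < m → m < v.1 → ¬ usedIn (C.getD m ∅) (outChan u.2 b)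

/-- The graph representations of `C` and `D` are isomorphic: a bijection of
comparators preserving the labeled edges. -/
def GraphIso {n m : ℕ} (C : Net n) (D : Net m) : Prop :=
  ∃ f : Vertex C ≃ Vertex D,
    ∀ (b : Bool) (u v : Vertex C),
      Edge C b u.val v.val ↔ Edge D b (f u).val (f v).val

/-- The graph representation of `C` is connected. -/
def GraphConnected {n : ℕ} (C : Net n) : Prop :=
  ∀ u v : Vertex C,
    Relation.ReflTransGen
      (fun a b : Vertex C => ∃ ℓ : Bool, Edge C ℓ a.val b.val ∨ Edge C ℓ b.val a.val) u v

/-- Reflection of a comparator: `(i,j) ↦ (n-j+1, n-i+1)` (in 1-based terms). -/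
def reflectComp {n : ℕ} (c : Comp n) : Comp n := (c.2.rev, c.1.rev)

def reflectLayer {n : ℕ} (L : Layer n) : Layer n := L.image reflectComp

/-- Reflection `C^R` of a comparator network. -/
def reflect {n : ℕ} (C : Net n) : Net n := C.map reflectLayer

/-- The first layer `F_n = {(2i-1, 2i) : 1 ≤ i ≤ ⌊n/2⌋}` (0-indexed: `(2i, 2i+1)`). -/
def FLayer (n : ℕ) : Layer n :=
  Finset.univ.filter fun c : Comp n => c.1.val % 2 = 0 ∧ c.2.val = c.1.val + 1

/-- The two-layer networks with first layer `F_n`, parametrized by second layer. -/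
def SecondLayers (n : ℕ) := {L : Layer n // IsLayer L}

/-- The number `|R(G_n)|` of equivalence classes of two-layer networks with
first layer `F_n`, under graph isomorphism `≈`. -/
noncomputable def numClasses (n : ℕ) : ℕ :=
  Nat.card (Quot fun L L' : SecondLayers n =>
    GraphIso ([FLayer n, L.val] : Net n) ([FLayer n, L'.val] : Net n))

/-- Redundant two-layer networks with first layer `F_n`. -/
def RedLayers (n : ℕ) := {L : Layer n // IsLayer L ∧ Redundant (FLayer n) L}

/-- The number of equivalence classes of redundant two-layer networks with
first layer `F_n`, under graph isomorphism `≈`. -/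
noncomputable def numRedClasses (n : ℕ) : ℕ :=
  Nat.card (Quot fun L L' : RedLayers n =>
    GraphIso ([FLayer n, L.val] : Net n) ([FLayer n, L'.val] : Net n))

/-!
Relabelling the inputs of a layer by a permutation `ρ` yields a generalized layer
(some comparators point downwards) followed by `ρ`; a generalized layer is a standard
layer followed by the swap of the channels of its downward comparators. Pushing
`π⁻¹` through `S` layer by layer this way gives a standard network `S'` of the same
depth and a permutation `ρ` with `S ∘ π⁻¹ = ρ ∘ S'`, so `ρ ∘ S'` sorts `outputs Q`.
Since `Q` fixes sorted vectors, `ρ` maps every sorted vector to a sorted one with the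
same number of ones, i.e. to itself; hence `S'` itself sorts `outputs Q`.
-/

section Untangling

variable {n : ℕ}

theorem NoOverlap.eq_of_mem {L : Layer n} (hL : NoOverlap L) {c c' : Comp n} {k : Fin n}
    (hc : c ∈ L) (hc' : c' ∈ L) (hk : c.1 = k ∨ c.2 = k) (hk' : c'.1 = k ∨ c'.2 = k) :
    c = c' := by
  by_contra hne
  have := hL c hc c' hc' hne
  grind

theorem NoOverlap.choose_eq_of_fst {L : Layer n} (hL : NoOverlap L) {c : Comp n}
    (hc : c ∈ L) (h : ∃ d ∈ L, d.1 = c.1) : h.choose = c :=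
  hL.eq_of_mem h.choose_spec.1 hc (.inl h.choose_spec.2) (.inl rfl)

theorem NoOverlap.choose_eq_of_snd {L : Layer n} (hL : NoOverlap L) {c : Comp n}
    (hc : c ∈ L) (h : ∃ d ∈ L, d.2 = c.2) : h.choose = c :=
  hL.eq_of_mem h.choose_spec.1 hc (.inr h.choose_spec.2) (.inr rfl)

theorem IsGenLayer.not_exists_fst_eq_snd {L : Layer n} (hL : IsGenLayer L) {c : Comp n}
    (hc : c ∈ L) : ¬ ∃ d ∈ L, d.1 = c.2 := by
  rintro ⟨d, hd, hdc⟩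
  obtain rfl := hL.2.eq_of_mem hd hc (.inl hdc) (.inr rfl)
  exact hL.1 d hd hdc

theorem IsLayer.isGenLayer {L : Layer n} (hL : IsLayer L) : IsGenLayer L :=
  ⟨fun c hc => (hL.1 c hc).ne, hL.2⟩

theorem IsGenLayer.applyLayer_fst {L : Layer n} (hL : IsGenLayer L) {c : Comp n}
    (hc : c ∈ L) (x : Fin n → Bool) : applyLayer L x c.1 = (x c.1 && x c.2) := by
  have h : ∃ d ∈ L, d.1 = c.1 := ⟨c, hc, rfl⟩
  rw [applyLayer, dif_pos h, hL.2.choose_eq_of_fst hc h]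

theorem IsGenLayer.applyLayer_snd {L : Layer n} (hL : IsGenLayer L) {c : Comp n}
    (hc : c ∈ L) (x : Fin n → Bool) : applyLayer L x c.2 = (x c.1 || x c.2) := by
  have h : ∃ d ∈ L, d.2 = c.2 := ⟨c, hc, rfl⟩
  rw [applyLayer, dif_neg (hL.not_exists_fst_eq_snd hc), dif_pos h,
    hL.2.choose_eq_of_snd hc h]

theorem applyLayer_of_not_usedIn {L : Layer n} {k : Fin n} (hk : ¬ usedIn L k)
    (x : Fin n → Bool) : applyLayer L x k = x k := by
  simp only [usedIn, not_exists, not_and, not_or] at hk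
  rw [applyLayer, dif_neg (by grind), dif_neg (by grind)]

theorem eq_of_forall_mem_layer {α : Type*} {L : Layer n} {f g : Fin n → α}
    (hfst : ∀ c ∈ L, f c.1 = g c.1) (hsnd : ∀ c ∈ L, f c.2 = g c.2)
    (hunused : ∀ k, ¬ usedIn L k → f k = g k) : f = g := by
  funext k
  by_cases hk : usedIn L k
  · obtain ⟨c, hc, rfl | rfl⟩ := hk
    exacts [hfst c hc, hsnd c hc]
  · exact hunused k hk

theorem permVec_apply (ρ : Equiv.Perm (Fin n)) (x : Fin n → Bool) (i : Fin n) :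
    permVec ρ x i = x (ρ.symm i) := rfl

theorem permVec_permVec (ρ τ : Equiv.Perm (Fin n)) (x : Fin n → Bool) :
    permVec ρ (permVec τ x) = permVec (ρ * τ) x := rfl

theorem permVec_symm_permVec (ρ : Equiv.Perm (Fin n)) (x : Fin n → Bool) :
    permVec ρ.symm (permVec ρ x) = x := by
  funext i
  simp [permVec_apply]

theorem permVec_injective (ρ : Equiv.Perm (Fin n)) : Function.Injective (permVec ρ) :=
  Function.LeftInverse.injective (permVec_symm_permVec ρ)

theorem IsGenLayer.permLayer {L : Layer n} (hL : IsGenLayer L) (σ : Equiv.Perm (Fin n)) :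
    IsGenLayer (permLayer σ L) := by
  refine ⟨?_, ?_⟩
  · simp only [SN.permLayer, Finset.mem_image]
    rintro _ ⟨c, hc, rfl⟩
    exact σ.injective.ne (hL.1 c hc)
  · simp only [NoOverlap, SN.permLayer, Finset.mem_image]
    rintro _ ⟨c, hc, rfl⟩ _ ⟨c', hc', rfl⟩ hne
    have := hL.2 c hc c' hc' (by rintro rfl; exact hne rfl)
    simpa only [ne_eq, EmbeddingLike.apply_eq_iff_eq] using this

theorem usedIn_permLayer {L : Layer n} {σ : Equiv.Perm (Fin n)} {k : Fin n}
    (h : usedIn (permLayer σ L) (σ k)) : usedIn L k := by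
  obtain ⟨_, hd, hk⟩ := h
  obtain ⟨c, hc, rfl⟩ := Finset.mem_image.mp hd
  exact ⟨c, hc, by simpa only [EmbeddingLike.apply_eq_iff_eq] using hk⟩

theorem applyLayer_permVec {L : Layer n} (hL : IsGenLayer L) (ρ : Equiv.Perm (Fin n))
    (x : Fin n → Bool) :
    applyLayer L (permVec ρ x) = permVec ρ (applyLayer (permLayer ρ.symm L) x) := by
  have hG := hL.permLayer ρ.symm
  have hmem : ∀ c ∈ L, (ρ.symm c.1, ρ.symm c.2) ∈ permLayer ρ.symm L :=
    fun c hc => Finset.mem_image_of_mem _ hc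
  refine eq_of_forall_mem_layer (L := L) (fun c hc => ?_) (fun c hc => ?_) (fun k hk => ?_)
  · rw [hL.applyLayer_fst hc]
    exact (hG.applyLayer_fst (hmem c hc) x).symm
  · rw [hL.applyLayer_snd hc]
    exact (hG.applyLayer_snd (hmem c hc) x).symm
  · rw [applyLayer_of_not_usedIn hk]
    exact (applyLayer_of_not_usedIn (mt usedIn_permLayer hk) x).symm

def sortPair (c : Comp n) : Comp n := (min c.1 c.2, max c.1 c.2)

theorem sortPair_of_le {c : Comp n} (h : c.1 ≤ c.2) : sortPair c = c :=
  Prod.ext (min_eq_left h) (max_eq_right h)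

theorem sortPair_of_ge {c : Comp n} (h : c.2 ≤ c.1) : sortPair c = c.swap :=
  Prod.ext (min_eq_right h) (max_eq_left h)

def untangle (L : Layer n) : Layer n := L.image sortPair

/-- Exchanges the two channels of every downward comparator of `L`: channel `k` of
`applyLayer L x` is channel `untangleChan L k` of `applyLayer (untangle L) x`. -/
noncomputable def untangleChan (L : Layer n) (k : Fin n) : Fin n :=
  if h : ∃ c ∈ L, c.1 = k then (sortPair h.choose).1
  else if h : ∃ c ∈ L, c.2 = k then (sortPair h.choose).2
  else k

theorem IsGenLayer.untangleChan_fst {L : Layer n} (hL : IsGenLayer L) {c : Comp n}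
    (hc : c ∈ L) : untangleChan L c.1 = (sortPair c).1 := by
  have h : ∃ d ∈ L, d.1 = c.1 := ⟨c, hc, rfl⟩
  rw [untangleChan, dif_pos h, hL.2.choose_eq_of_fst hc h]

theorem IsGenLayer.untangleChan_snd {L : Layer n} (hL : IsGenLayer L) {c : Comp n}
    (hc : c ∈ L) : untangleChan L c.2 = (sortPair c).2 := by
  have h : ∃ d ∈ L, d.2 = c.2 := ⟨c, hc, rfl⟩
  rw [untangleChan, dif_neg (hL.not_exists_fst_eq_snd hc), dif_pos h,
    hL.2.choose_eq_of_snd hc h]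

theorem untangleChan_of_not_usedIn {L : Layer n} {k : Fin n} (hk : ¬ usedIn L k) :
    untangleChan L k = k := by
  simp only [usedIn, not_exists, not_and, not_or] at hk
  rw [untangleChan, dif_neg (by grind), dif_neg (by grind)]

theorem IsGenLayer.untangleChan_involutive {L : Layer n} (hL : IsGenLayer L) :
    Function.Involutive (untangleChan L) := by
  intro k
  by_cases hk : usedIn L k
  · obtain ⟨c, hc, rfl | rfl⟩ := hk <;> rcases le_total c.1 c.2 with h | h
    all_goals
      simp only [hL.untangleChan_fst hc, hL.untangleChan_snd hc, sortPair_of_le,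
        sortPair_of_ge, h, Prod.fst_swap, Prod.snd_swap]
  · rw [untangleChan_of_not_usedIn hk, untangleChan_of_not_usedIn hk]

theorem usedIn_untangle {L : Layer n} {k : Fin n} (h : usedIn (untangle L) k) :
    usedIn L k := by
  obtain ⟨_, hd, hk⟩ := h
  obtain ⟨c, hc, rfl⟩ := Finset.mem_image.mp hd
  refine ⟨c, hc, ?_⟩
  rcases le_total c.1 c.2 with h | h
  · rwa [sortPair_of_le h] at hk
  · rw [sortPair_of_ge h] at hk
    exact hk.symm

theorem IsGenLayer.isLayer_untangle {L : Layer n} (hL : IsGenLayer L) :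
    IsLayer (untangle L) := by
  refine ⟨?_, ?_⟩
  · simp only [untangle, Finset.mem_image]
    rintro _ ⟨c, hc, rfl⟩
    exact min_lt_max.mpr (hL.1 c hc)
  · simp only [NoOverlap, untangle, Finset.mem_image]
    rintro _ ⟨c, hc, rfl⟩ _ ⟨c', hc', rfl⟩ hne
    have := hL.2 c hc c' hc' (by rintro rfl; exact hne rfl)
    rcases le_total c.1 c.2 with h | h <;> rcases le_total c'.1 c'.2 with h' | h' <;>
      simp only [sortPair_of_le, sortPair_of_ge, h, h', Prod.fst_swap, Prod.snd_swap] <;>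
      tauto

theorem IsGenLayer.applyLayer_eq_permVec_untangle {L : Layer n} (hL : IsGenLayer L)
    (x : Fin n → Bool) :
    applyLayer L x = permVec hL.untangleChan_involutive.toPerm (applyLayer (untangle L) x) := by
  have hU := hL.isLayer_untangle.isGenLayer
  have hmem : ∀ c ∈ L, sortPair c ∈ untangle L := fun c hc => Finset.mem_image_of_mem _ hc
  have hperm : ∀ y : Fin n → Bool, ∀ k,
      permVec hL.untangleChan_involutive.toPerm y k = y (untangleChan L k) := fun _ _ => rfl
  refine eq_of_forall_mem_layer (L := L) (fun c hc => ?_) (fun c hc => ?_) (fun k hk => ?_)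
  · rw [hperm, hL.untangleChan_fst hc, hU.applyLayer_fst (hmem c hc), hL.applyLayer_fst hc]
    rcases le_total c.1 c.2 with h | h
    · rw [sortPair_of_le h]
    · rw [sortPair_of_ge h, Bool.and_comm]; rfl
  · rw [hperm, hL.untangleChan_snd hc, hU.applyLayer_snd (hmem c hc), hL.applyLayer_snd hc]
    rcases le_total c.1 c.2 with h | h
    · rw [sortPair_of_le h]
    · rw [sortPair_of_ge h, Bool.or_comm]; rfl
  · rw [hperm, untangleChan_of_not_usedIn hk, applyLayer_of_not_usedIn hk,
      applyLayer_of_not_usedIn (mt usedIn_untangle hk)]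

theorem IsGenLayer.exists_applyLayer_permVec {L : Layer n} (hL : IsGenLayer L)
    (ρ : Equiv.Perm (Fin n)) :
    ∃ (L' : Layer n) (ρ' : Equiv.Perm (Fin n)), IsLayer L' ∧
      ∀ x, applyLayer L (permVec ρ x) = permVec ρ' (applyLayer L' x) := by
  have hG := hL.permLayer ρ.symm
  refine ⟨untangle (SN.permLayer ρ.symm L), ρ * hG.untangleChan_involutive.toPerm,
    hG.isLayer_untangle, fun x => ?_⟩
  rw [applyLayer_permVec hL, hG.applyLayer_eq_permVec_untangle, permVec_permVec]

theorem run_cons (L : Layer n) (T : Net n) (x : Fin n → Bool) :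
    run (L :: T) x = run T (applyLayer L x) := rfl

theorem run_append (A B : Net n) (x : Fin n → Bool) :
    run (A ++ B) x = run B (run A x) :=
  List.foldl_append

theorem IsGenNet.exists_run_permVec {S : Net n} (hS : IsGenNet S) (ρ : Equiv.Perm (Fin n)) :
    ∃ (S' : Net n) (ρ' : Equiv.Perm (Fin n)), S'.length = S.length ∧ IsNet S' ∧
      ∀ x, run S (permVec ρ x) = permVec ρ' (run S' x) := by
  induction S generalizing ρ with
  | nil => exact ⟨[], ρ, rfl, by simp [IsNet], fun _ => rfl⟩
  | cons L T ih =>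
    obtain ⟨L', σ, hL', hσ⟩ := (hS L List.mem_cons_self).exists_applyLayer_permVec ρ
    obtain ⟨T', ρ', hlen, hT', hρ'⟩ :=
      ih (fun M hM => hS M (List.mem_cons_of_mem _ hM)) σ
    refine ⟨L' :: T', ρ', by simp [hlen], ?_, fun x => by rw [run_cons, run_cons, hσ, hρ']⟩
    rintro M (_ | ⟨_, hM⟩)
    exacts [hL', hT' M hM]

end Untangling

section Sorted

variable {n : ℕ}

theorem applyLayer_of_bsorted {L : Layer n} (hL : IsLayer L) {s : Fin n → Bool}
    (hs : BSorted s) : applyLayer L s = s := by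
  refine eq_of_forall_mem_layer (L := L) (fun c hc => ?_) (fun c hc => ?_)
    (fun k hk => applyLayer_of_not_usedIn hk s)
  all_goals
    have hle := hs c.1 c.2 (hL.1 c hc).le
    first
      | rw [hL.isGenLayer.applyLayer_fst hc]
      | rw [hL.isGenLayer.applyLayer_snd hc]
    revert hle; cases s c.1 <;> cases s c.2 <;> decide

theorem run_of_bsorted {C : Net n} (hC : IsNet C) {s : Fin n → Bool} (hs : BSorted s) :
    run C s = s := by
  induction C with
  | nil => rfl
  | cons L T ih =>
    rw [run_cons, applyLayer_of_bsorted (hC L List.mem_cons_self) hs]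
    exact ih fun M hM => hC M (List.mem_cons_of_mem _ hM)

theorem BSorted.le_or_le {x y : Fin n → Bool} (hx : BSorted x) (hy : BSorted y) :
    x ≤ y ∨ y ≤ x := by
  refine or_iff_not_imp_left.mpr fun hxy j => ?_
  obtain ⟨i, hi⟩ := not_forall.mp hxy
  have hxi : x i = true := by revert hi; cases x i <;> simp
  have hyi : y i = false := by revert hi; cases y i <;> simp
  rcases le_total i j with hij | hji
  · exact (Bool.le_true _).trans (hxi ▸ hx i j hij)
  · exact (hyi ▸ hy j i hji).trans (Bool.false_le _)

theorem BSorted.eq_of_card_eq {x y : Fin n → Bool} (hx : BSorted x) (hy : BSorted y)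
    (h : (Finset.univ.filter fun i => x i).card = (Finset.univ.filter fun i => y i).card) :
    x = y := by
  wlog hxy : x ≤ y generalizing x y
  · exact (this hy hx h.symm ((hx.le_or_le hy).resolve_left hxy)).symm
  have hsub : (Finset.univ.filter fun i => x i) ⊆ Finset.univ.filter fun i => y i :=
    Finset.monotone_filter_right _ fun i _ => Bool.le_iff_imp.mp (hxy i)
  have heq := Finset.eq_of_subset_of_card_le hsub h.ge
  funext i
  simpa using congrArg (i ∈ ·) heq

theorem card_filter_permVec (ρ : Equiv.Perm (Fin n)) (x : Fin n → Bool) :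
    (Finset.univ.filter fun i => permVec ρ x i).card =
      (Finset.univ.filter fun i => x i).card :=
  Finset.card_equiv ρ.symm fun i => by
    simp only [Finset.mem_filter, Finset.mem_univ, true_and]; rfl

theorem permVec_eq_self_of_bsorted {ρ : Equiv.Perm (Fin n)} {s : Fin n → Bool}
    (hs : BSorted s) (hρs : BSorted (permVec ρ s)) : permVec ρ s = s :=
  hρs.eq_of_card_eq hs (card_filter_permVec ρ s)

theorem bsorted_of_bsorted_permVec {ρ : Equiv.Perm (Fin n)}
    (hfix : ∀ s, BSorted s → BSorted (permVec ρ s)) {y : Fin n → Bool}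
    (hy : BSorted (permVec ρ y)) : BSorted y := by
  have hself : permVec ρ (permVec ρ y) = permVec ρ y :=
    permVec_eq_self_of_bsorted hy (hfix _ hy)
  rwa [← permVec_injective ρ hself]

end Sorted

theorem subsumption_perm_general {n : ℕ} (P S Q : Net n) (π : Equiv.Perm (Fin n))
    (hPS : IsSortingNet (P ++ S)) (hQ : IsNet Q)
    (hsub : outputs Q ⊆ permSet π (outputs P)) :
    ∃ S' : Net n, S'.length = S.length ∧ IsSortingNet (Q ++ S') := by
  have hS : IsGenNet S := fun L hL => (hPS.1 L (List.mem_append_right P hL)).isGenLayer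
  obtain ⟨S', ρ, hlen, hS', hcomm⟩ := hS.exists_run_permVec π.symm
  have hsorts : ∀ x ∈ outputs Q, BSorted (permVec ρ (run S' x)) := by
    intro x hx
    obtain ⟨_, ⟨z, rfl⟩, rfl⟩ := hsub hx
    rw [← hcomm, permVec_symm_permVec, ← run_append]
    exact hPS.2 z
  have hfix : ∀ s, BSorted s → BSorted (permVec ρ s) := fun s hs => by
    simpa only [run_of_bsorted hS' hs] using hsorts s ⟨s, run_of_bsorted hQ hs⟩
  refine ⟨S', hlen, ⟨?_, fun x => ?_⟩⟩
  · intro L hL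
    exact (List.mem_append.mp hL).elim (hQ L) (hS' L)
  · rw [run_append]
    exact bsorted_of_bsorted_permVec hfix (hsorts _ ⟨x, rfl⟩)

/-- if `P;S` is a sorting network of depth d and `Q` has the same
depth as `P` with `outputs(Q) ⊆ π(outputs(P))` for some permutation `π`, then
there is `S'` of the same depth as `S` such that `Q;S'` is a sorting network
(of depth d). -/
theorem subsumption_perm {n : ℕ} (P S Q : Net n) (π : Equiv.Perm (Fin n))
    (hPS : IsSortingNet (P ++ S)) (hQ : IsNet Q)
    (hdepth : Q.length = P.length)
    (hsub : outputs Q ⊆ permSet π (outputs P)) :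
    ∃ S' : Net n, S'.length = S.length ∧ IsSortingNet (Q ++ S') :=
  subsumption_perm_general P S Q π hPS hQ hsub

end SN
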